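/- Orthogonality of the basis elements (orthogonality claim of Theorem 4.1 of the paper, realized via the trace formula of Lemma 5.1): let p₁,q₁,ℓ₁ and p₂,q₂,ℓ₂ be natural numbers with ℓᵢ ≤ pᵢ+qᵢ, satisfying p₁−q₁ = p₂−q₂ (same r), (p₁+q₁)−2ℓ₁ = (p₂+q₂)−2ℓ₂ (same m), but p₁+q₁ ≠ p₂+q₂ (different n). Set O = η(q₁, p₁, (p₁+q₁)−ℓ₁) ∘ η(p₂, q₂, ℓ₂) ∈ E. Then for every natural number d: (i) for each 0 ≤ j ≤ d there is a scalar c_j ∈ ℂ with O(x^(d−j)·y^j) = c_j · x^(d−j)·y^j, and (ii) Σ_{j=0}^{d} c_j = 0. -/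

import Mathlib

open MvPolynomial

noncomputable section

/-- The polynomial ring ℂ[x,y]. -/
abbrev P2 : Type := MvPolynomial (Fin 2) ℂ

/-- The algebra of ℂ-linear endomorphisms of ℂ[x,y]. -/
abbrev E : Type := Module.End ℂ P2

/-- `a₊` : multiplication by `x`. -/
def aP : E := LinearMap.mulLeft ℂ (X 0 : P2)

/-- `b₊` : multiplication by `y`. -/
def bP : E := LinearMap.mulLeft ℂ (X 1 : P2)

/-- `a₋ = ε ∂/∂x`. -/
def aM (ε : ℝ) : E := (ε : ℂ) • (pderiv (0 : Fin 2)).toLinearMap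

/-- `b₋ = ε ∂/∂y`. -/
def bM (ε : ℝ) : E := (ε : ℂ) • (pderiv (1 : Fin 2)).toLinearMap

def J0 (ε : ℝ) : E := (1/2 : ℂ) • (aP * aM ε - bP * bM ε)
def Jp (ε : ℝ) : E := aP * bM ε
def Jm (ε : ℝ) : E := aM ε * bP
def K0 (ε : ℝ) : E := (1/2 : ℂ) • (aP * aM ε + bP * bM ε + (ε : ℂ) • (1 : E))
def Kp : E := aP * bP
def Km (ε : ℝ) : E := aM ε * bM ε

/-- `(ad J₋)(w) = J₋w − wJ₋`. -/
def adJm (ε : ℝ) (w : E) : E := Jm ε * w - w * Jm ε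

/-- `η(p,q,ℓ) = (ad J₋)^ℓ (a₊^p b₋^q)`. -/
def eta (ε : ℝ) (p q ℓ : ℕ) : E := (adJm ε)^[ℓ] (aP ^ p * bM ε ^ q)

namespace EtaOrth

/-- the monomial x^a y^b -/
def mon (a b : ℕ) : P2 := (X 0 : P2) ^ a * (X 1) ^ b

/-- exponent vector -/
def ev (a b : ℕ) : Fin 2 →₀ ℕ := Finsupp.single 0 a + Finsupp.single 1 b

lemma ev_apply0 (a b : ℕ) : ev a b 0 = a := by simp [ev]
lemma ev_apply1 (a b : ℕ) : ev a b 1 = b := by simp [ev]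

lemma eq_ev_iff (s : Fin 2 →₀ ℕ) (a b : ℕ) : s = ev a b ↔ s 0 = a ∧ s 1 = b := by
  constructor
  · rintro rfl; exact ⟨ev_apply0 a b, ev_apply1 a b⟩
  · rintro ⟨h0, h1⟩
    ext i
    fin_cases i
    · simpa [ev_apply0] using h0
    · simpa [ev_apply1] using h1

lemma ev_sub0 (s : Fin 2 →₀ ℕ) : s - Finsupp.single 0 1 = ev (s 0 - 1) (s 1) := by
  rw [eq_ev_iff]
  constructor <;> simp [Finsupp.tsub_apply]

lemma mon_eq (a b : ℕ) : mon a b = monomial (ev a b) (1:ℂ) := by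
  rw [mon, ev, X_pow_eq_monomial, X_pow_eq_monomial, monomial_mul, one_mul]

lemma coeff_mon_self (a b : ℕ) : coeff (ev a b) (mon a b) = 1 := by
  rw [mon_eq, coeff_monomial, if_pos rfl]

lemma pderiv0_mon (a b : ℕ) : pderiv (0 : Fin 2) (mon a b) = (a : ℂ) • mon (a-1) b := by
  rw [mon, mon, pderiv_mul, Derivation.leibniz_pow, Derivation.leibniz_pow, pderiv_X_self,
    pderiv_X_of_ne (by decide)]
  simp [smul_mul_assoc, Nat.cast_smul_eq_nsmul]
  ring

lemma pderiv1_mon (a b : ℕ) : pderiv (1 : Fin 2) (mon a b) = (b : ℂ) • mon a (b-1) := by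
  rw [mon, mon, pderiv_mul, Derivation.leibniz_pow, Derivation.leibniz_pow, pderiv_X_self,
    pderiv_X_of_ne (by decide)]
  simp [smul_mul_assoc, Nat.cast_smul_eq_nsmul]
  ring

lemma aP_mon (a b : ℕ) : aP (mon a b) = mon (a+1) b := by
  simp only [aP, LinearMap.mulLeft_apply, mon, pow_succ]; ring
lemma bP_mon (a b : ℕ) : bP (mon a b) = mon a (b+1) := by
  simp only [bP, LinearMap.mulLeft_apply, mon, pow_succ]; ring
lemma aM_mon (ε : ℝ) (a b : ℕ) : aM ε (mon a b) = ((ε : ℂ) * a) • mon (a-1) b := by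
  simp [aM, pderiv0_mon, smul_smul]
lemma bM_mon (ε : ℝ) (a b : ℕ) : bM ε (mon a b) = ((ε : ℂ) * b) • mon a (b-1) := by
  simp [bM, pderiv1_mon, smul_smul]


/-- `T` shifts bidegrees by `(s,t)` (acting diagonally on the monomial basis
up to scalars). -/
def Shifts (T : E) (s t : ℤ) : Prop :=
  ∀ a b : ℕ, T (mon a b) = 0 ∨
    ∃ (c : ℂ) (a' b' : ℕ), (a' : ℤ) = a + s ∧ (b' : ℤ) = b + t ∧ T (mon a b) = c • mon a' b'

lemma Shifts.congr {T : E} {s t s' t' : ℤ} (h : Shifts T s t) (hs : s = s') (ht : t = t') :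
    Shifts T s' t' := hs ▸ ht ▸ h

lemma shifts_zero (s t : ℤ) : Shifts 0 s t := fun _ _ => Or.inl rfl

lemma Shifts.smul {T : E} {s t : ℤ} (c : ℂ) (h : Shifts T s t) : Shifts (c • T) s t := by
  intro a b
  rcases h a b with h1 | ⟨c', a', b', ha, hb, he⟩
  · exact Or.inl (by simp [h1])
  · exact Or.inr ⟨c * c', a', b', ha, hb, by simp [he, smul_smul]⟩

lemma Shifts.add {T₁ T₂ : E} {s t : ℤ} (h₁ : Shifts T₁ s t) (h₂ : Shifts T₂ s t) :
    Shifts (T₁ + T₂) s t := by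
  intro a b
  rcases h₁ a b with e₁ | ⟨c₁, a₁, b₁, ha₁, hb₁, e₁⟩ <;>
    rcases h₂ a b with e₂ | ⟨c₂, a₂, b₂, ha₂, hb₂, e₂⟩
  · exact Or.inl (by simp [e₁, e₂])
  · exact Or.inr ⟨c₂, a₂, b₂, ha₂, hb₂, by simp [e₁, e₂]⟩
  · exact Or.inr ⟨c₁, a₁, b₁, ha₁, hb₁, by simp [e₁, e₂]⟩
  · refine Or.inr ⟨c₁ + c₂, a₁, b₁, ha₁, hb₁, ?_⟩
    have : a₂ = a₁ := by omega
    have hb : b₂ = b₁ := by omega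
    subst this; subst hb
    simp [e₁, e₂, add_smul]

lemma Shifts.mul {T₁ T₂ : E} {s₁ t₁ s₂ t₂ : ℤ} (h₁ : Shifts T₁ s₁ t₁) (h₂ : Shifts T₂ s₂ t₂) :
    Shifts (T₁ * T₂) (s₁ + s₂) (t₁ + t₂) := by
  intro a b
  rcases h₂ a b with e₂ | ⟨c₂, a₂, b₂, ha₂, hb₂, e₂⟩
  · exact Or.inl (by simp [Module.End.mul_apply, e₂])
  rcases h₁ a₂ b₂ with e₁ | ⟨c₁, a₁, b₁, ha₁, hb₁, e₁⟩
  · exact Or.inl (by simp [Module.End.mul_apply, e₂, e₁])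
  · refine Or.inr ⟨c₂ * c₁, a₁, b₁, by omega, by omega, ?_⟩
    simp [Module.End.mul_apply, e₂, e₁, smul_smul]

lemma shifts_one : Shifts 1 0 0 := by
  intro a b
  exact Or.inr ⟨1, a, b, by omega, by omega, by simp⟩

lemma Shifts.pow {T : E} {s t : ℤ} (h : Shifts T s t) (n : ℕ) :
    Shifts (T ^ n) (n * s) (n * t) := by
  induction n with
  | zero => simpa using shifts_one
  | succ n ih =>
      have := ih.mul h
      rw [pow_succ]
      exact this.congr (by push_cast; ring) (by push_cast; ring)

lemma shifts_aP : Shifts aP 1 0 := by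
  intro a b
  exact Or.inr ⟨1, a + 1, b, by omega, by omega, by simp [aP_mon]⟩

lemma shifts_bP : Shifts bP 0 1 := by
  intro a b
  exact Or.inr ⟨1, a, b + 1, by omega, by omega, by simp [bP_mon]⟩

lemma shifts_aM (ε : ℝ) : Shifts (aM ε) (-1) 0 := by
  intro a b
  match a with
  | 0 => exact Or.inl (by simp [aM_mon])
  | a + 1 => exact Or.inr ⟨(ε : ℂ) * (a + 1), a, b, by omega, by omega, by
      simpa using aM_mon ε (a+1) b⟩

lemma shifts_bM (ε : ℝ) : Shifts (bM ε) 0 (-1) := by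
  intro a b
  match b with
  | 0 => exact Or.inl (by simp [bM_mon])
  | b + 1 => exact Or.inr ⟨(ε : ℂ) * (b + 1), a, b, by omega, by omega, by
      simpa using bM_mon ε a (b+1)⟩

lemma shifts_of_mem_span {S : Set E} {s t : ℤ} (hS : ∀ U ∈ S, Shifts U s t) {T : E}
    (hT : T ∈ Submodule.span ℂ S) : Shifts T s t := by
  induction hT using Submodule.span_induction with
  | mem x hx => exact hS x hx
  | zero => exact shifts_zero s t
  | add x y hx hy ihx ihy => exact ihx.add ihy
  | smul c x hx ihx => exact ihx.smul c


lemma pderiv_swap (p : P2) :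
    pderiv (0 : Fin 2) (pderiv (1 : Fin 2) p) = pderiv (1 : Fin 2) (pderiv (0 : Fin 2) p) := by
  induction p using MvPolynomial.induction_on' with
  | monomial s c =>
      have hA : s - Finsupp.single 1 1 - Finsupp.single 0 1
          = s - Finsupp.single 0 1 - Finsupp.single 1 1 := by
        ext i
        simp only [Finsupp.tsub_apply, Finsupp.single_apply]
        omega
      have h0 : ((s - Finsupp.single 1 1 : Fin 2 →₀ ℕ)) 0 = s 0 := by
        simp [Finsupp.tsub_apply, Finsupp.single_apply]
      have h1 : ((s - Finsupp.single 0 1 : Fin 2 →₀ ℕ)) 1 = s 1 := by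
        simp [Finsupp.tsub_apply, Finsupp.single_apply]
      simp only [pderiv_monomial, hA, h0, h1]
      congr 1
      ring
  | add p q hp hq => simp [hp, hq]

lemma comm_aP_bP : Commute aP bP := by
  apply LinearMap.ext; intro p
  simp only [aP, bP, Module.End.mul_apply, LinearMap.mulLeft_apply]
  ring

lemma comm_aM_bP (ε : ℝ) : Commute (aM ε) bP := by
  apply LinearMap.ext; intro p
  simp only [aM, bP, Module.End.mul_apply, LinearMap.mulLeft_apply, LinearMap.smul_apply,
    Derivation.coeFn_coe, pderiv_mul, pderiv_X_of_ne (show (1:Fin 2) ≠ 0 by decide)]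
  simp [mul_smul_comm]

lemma comm_aP_bM (ε : ℝ) : Commute aP (bM ε) := by
  apply LinearMap.ext; intro p
  simp only [aP, bM, Module.End.mul_apply, LinearMap.mulLeft_apply, LinearMap.smul_apply,
    Derivation.coeFn_coe, pderiv_mul, pderiv_X_of_ne (show (0:Fin 2) ≠ 1 by decide)]
  simp [mul_smul_comm]

lemma comm_aM_bM (ε : ℝ) : Commute (aM ε) (bM ε) := by
  apply LinearMap.ext; intro p
  simp only [aM, bM, Module.End.mul_apply, LinearMap.smul_apply, Derivation.coeFn_coe]
  simp [pderiv_swap]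

lemma aM_aP (ε : ℝ) : aM ε * aP = aP * aM ε + (ε : ℂ) • 1 := by
  apply LinearMap.ext; intro p
  simp only [aM, aP, Module.End.mul_apply, LinearMap.add_apply, LinearMap.mulLeft_apply,
    LinearMap.smul_apply, Derivation.coeFn_coe, pderiv_mul, pderiv_X_self,
    Module.End.one_apply]
  simp only [smul_add, mul_smul_comm, smul_eq_mul, mul_one, one_mul]
  abel

lemma bM_bP (ε : ℝ) : bM ε * bP = bP * bM ε + (ε : ℂ) • 1 := by
  apply LinearMap.ext; intro p
  simp only [bM, bP, Module.End.mul_apply, LinearMap.add_apply, LinearMap.mulLeft_apply,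
    LinearMap.smul_apply, Derivation.coeFn_coe, pderiv_mul, pderiv_X_self,
    Module.End.one_apply]
  simp only [smul_add, mul_smul_comm, smul_eq_mul, mul_one, one_mul]
  abel

lemma aM_aP_pow_succ (ε : ℝ) : ∀ α : ℕ,
    aM ε * aP ^ (α+1) = aP ^ (α+1) * aM ε + ((ε : ℂ) * (α+1)) • aP ^ α
  | 0 => by simpa using aM_aP ε
  | (α + 1) => by
      calc aM ε * aP ^ (α+2) = (aM ε * aP ^ (α+1)) * aP := by rw [pow_succ, mul_assoc]
        _ = (aP ^ (α+1) * aM ε) * aP + ((ε : ℂ) * (α+1)) • (aP ^ α * aP) := by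
              rw [aM_aP_pow_succ ε α, add_mul, smul_mul_assoc]
        _ = aP ^ (α+1) * (aP * aM ε + (ε : ℂ) • 1) + ((ε : ℂ) * (α+1)) • aP ^ (α+1) := by
              rw [mul_assoc, aM_aP, ← pow_succ]
        _ = aP ^ (α+1+1) * aM ε + ((ε : ℂ) * (↑(α+1)+1)) • aP ^ (α+1) := by
              rw [mul_add, ← mul_assoc, ← pow_succ, mul_smul_comm, mul_one, add_assoc, ← add_smul]
              congr 2
              push_cast; ring

lemma aM_aP_pow (ε : ℝ) (α : ℕ) :
    aM ε * aP ^ α = aP ^ α * aM ε + ((ε : ℂ) * α) • aP ^ (α - 1) := by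
  cases α with
  | zero => simp
  | succ α' => simpa using aM_aP_pow_succ ε α'

lemma bM_pow_bP_succ (ε : ℝ) : ∀ δ : ℕ,
    bM ε ^ (δ+1) * bP = bP * bM ε ^ (δ+1) + ((ε : ℂ) * (δ+1)) • bM ε ^ δ
  | 0 => by simpa using bM_bP ε
  | (δ + 1) => by
      calc bM ε ^ (δ+2) * bP = bM ε * (bM ε ^ (δ+1) * bP) := by rw [pow_succ', mul_assoc]
        _ = bM ε * (bP * bM ε ^ (δ+1)) + ((ε : ℂ) * (δ+1)) • (bM ε * bM ε ^ δ) := by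
              rw [bM_pow_bP_succ ε δ, mul_add, mul_smul_comm]
        _ = (bP * bM ε + (ε : ℂ) • 1) * bM ε ^ (δ+1) + ((ε : ℂ) * (δ+1)) • bM ε ^ (δ+1) := by
              rw [← mul_assoc, bM_bP, ← pow_succ']
        _ = bP * bM ε ^ (δ+1+1) + ((ε : ℂ) * (↑(δ+1)+1)) • bM ε ^ (δ+1) := by
              rw [add_mul, mul_assoc, ← pow_succ', smul_mul_assoc, one_mul, add_assoc, ← add_smul]
              congr 2
              push_cast; ring

lemma bM_pow_bP (ε : ℝ) (δ : ℕ) :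
    bM ε ^ δ * bP = bP * bM ε ^ δ + ((ε : ℂ) * δ) • bM ε ^ (δ - 1) := by
  cases δ with
  | zero => simp
  | succ δ' => simpa using bM_pow_bP_succ ε δ'


/-- Normally ordered word `a₊^α a₋^β b₊^γ b₋^δ`. -/
def Nop (ε : ℝ) (α β γ δ : ℕ) : E := (aP ^ α * aM ε ^ β) * (bP ^ γ * bM ε ^ δ)

lemma shifts_Nop (ε : ℝ) (α β γ δ : ℕ) :
    Shifts (Nop ε α β γ δ) ((α : ℤ) - β) ((γ : ℤ) - δ) := by
  have h := (((shifts_aP.pow α).mul ((shifts_aM ε).pow β)).mul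
    ((shifts_bP.pow γ).mul ((shifts_bM ε).pow δ)))
  exact h.congr (by push_cast; ring) (by push_cast; ring)

lemma comm_bP_aside (ε : ℝ) (α β : ℕ) : Commute bP (aP ^ α * aM ε ^ β) :=
  ((comm_aP_bP.symm.pow_right α).mul_right ((comm_aM_bP ε).symm.pow_right β))

lemma comm_aM_bside (ε : ℝ) (γ δ : ℕ) : Commute (aM ε) (bP ^ γ * bM ε ^ δ) :=
  ((comm_aM_bP ε).pow_right γ).mul_right ((comm_aM_bM ε).pow_right δ)

lemma adJm_Nop (ε : ℝ) (α β γ δ : ℕ) :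
    adJm ε (Nop ε α β γ δ) = ((ε : ℂ) * α) • Nop ε (α-1) β (γ+1) δ
      - ((ε : ℂ) * δ) • Nop ε α (β+1) γ (δ-1) := by
  have hJN : Jm ε * Nop ε α β γ δ
      = Nop ε α (β+1) (γ+1) δ + ((ε : ℂ) * α) • Nop ε (α-1) β (γ+1) δ := by
    calc Jm ε * Nop ε α β γ δ
        = (aM ε * (aP ^ α * aM ε ^ β)) * (bP * (bP ^ γ * bM ε ^ δ)) := by
          rw [Jm, Nop, Commute.mul_mul_mul_comm (comm_bP_aside ε α β)]
      _ = ((aM ε * aP ^ α) * aM ε ^ β) * (bP ^ (γ+1) * bM ε ^ δ) := by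
          rw [← mul_assoc bP, ← pow_succ', ← mul_assoc (aM ε)]
      _ = ((aP ^ α * aM ε) * aM ε ^ β) * (bP ^ (γ+1) * bM ε ^ δ)
            + ((ε : ℂ) * α) • ((aP ^ (α-1) * aM ε ^ β) * (bP ^ (γ+1) * bM ε ^ δ)) := by
          rw [aM_aP_pow, add_mul, add_mul, smul_mul_assoc, smul_mul_assoc]
      _ = Nop ε α (β+1) (γ+1) δ + ((ε : ℂ) * α) • Nop ε (α-1) β (γ+1) δ := by
          rw [Nop, Nop, mul_assoc (aP ^ α), ← pow_succ']
  have hNJ : Nop ε α β γ δ * Jm ε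
      = Nop ε α (β+1) (γ+1) δ + ((ε : ℂ) * δ) • Nop ε α (β+1) γ (δ-1) := by
    calc Nop ε α β γ δ * Jm ε
        = ((aP ^ α * aM ε ^ β) * aM ε) * ((bP ^ γ * bM ε ^ δ) * bP) := by
          rw [Jm, Nop, Commute.mul_mul_mul_comm (comm_aM_bside ε γ δ).symm]
      _ = (aP ^ α * aM ε ^ (β+1)) * (bP ^ γ * (bM ε ^ δ * bP)) := by
          rw [mul_assoc (aP ^ α), ← pow_succ, mul_assoc (bP ^ γ)]
      _ = (aP ^ α * aM ε ^ (β+1)) * (bP ^ γ * (bP * bM ε ^ δ))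
            + ((ε : ℂ) * δ) • ((aP ^ α * aM ε ^ (β+1)) * (bP ^ γ * bM ε ^ (δ-1))) := by
          rw [bM_pow_bP, mul_add, mul_add, mul_smul_comm, mul_smul_comm]
      _ = Nop ε α (β+1) (γ+1) δ + ((ε : ℂ) * δ) • Nop ε α (β+1) γ (δ-1) := by
          rw [Nop, Nop, ← mul_assoc (bP ^ γ), ← pow_succ]
  rw [adJm, hJN, hNJ]
  abel

/-- The generating set for the span containing `eta ε p q ℓ`. -/
def gens (ε : ℝ) (p q ℓ : ℕ) : Set E :=
  {T | ∃ u v, u + v = ℓ ∧ u ≤ p ∧ v ≤ q ∧ T = Nop ε (p-u) v u (q-v)}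

/-- `adJm` as a linear map on `E`. -/
def adL (ε : ℝ) : E →ₗ[ℂ] E :=
  LinearMap.mulLeft ℂ (Jm ε) - LinearMap.mulRight ℂ (Jm ε)

lemma adL_apply (ε : ℝ) (w : E) : adL ε w = adJm ε w := rfl

lemma eta_mem (ε : ℝ) (p q : ℕ) :
    ∀ ℓ, eta ε p q ℓ ∈ Submodule.span ℂ (gens ε p q ℓ) := by
  intro ℓ
  induction ℓ with
  | zero =>
      apply Submodule.subset_span
      exact ⟨0, 0, rfl, Nat.zero_le _, Nat.zero_le _, by simp [eta, Nop]⟩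
  | succ ℓ ih =>
      have hstep : ∀ x ∈ Submodule.span ℂ (gens ε p q ℓ),
          adL ε x ∈ Submodule.span ℂ (gens ε p q (ℓ+1)) := by
        intro x hx
        induction hx using Submodule.span_induction with
        | mem T hT =>
            obtain ⟨u, v, huv, hu, hv, rfl⟩ := hT
            rw [adL_apply, adJm_Nop]
            apply Submodule.sub_mem
            · rcases Nat.lt_or_ge u p with h | h
              · apply Submodule.smul_mem
                apply Submodule.subset_span
                exact ⟨u+1, v, by omega, by omega, hv, by
                  have : p - u - 1 = p - (u+1) := by omega
                  rw [this]⟩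
              · have hup : u = p := le_antisymm hu h
                have : ((ε : ℂ) * (p - u : ℕ)) = 0 := by
                  subst hup; simp
                rw [this, zero_smul]
                exact Submodule.zero_mem _
            · rcases Nat.lt_or_ge v q with h | h
              · apply Submodule.smul_mem
                apply Submodule.subset_span
                exact ⟨u, v+1, by omega, hu, by omega, by
                  have : q - v - 1 = q - (v+1) := by omega
                  rw [this]⟩
              · have hvq : v = q := le_antisymm hv h
                have : ((ε : ℂ) * (q - v : ℕ)) = 0 := by
                  subst hvq; simp
                rw [this, zero_smul]
                exact Submodule.zero_mem _
        | zero => simpa using Submodule.zero_mem _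
        | add x y hx hy ihx ihy => simpa [map_add] using Submodule.add_mem _ ihx ihy
        | smul c x hx ihx => simpa [map_smul] using Submodule.smul_mem _ c ihx
      have : eta ε p q (ℓ+1) = adL ε (eta ε p q ℓ) := by
        rw [eta, eta, Function.iterate_succ_apply', adL_apply]
      rw [this]
      exact hstep _ ih

lemma eta_eq_zero (ε : ℝ) {p q ℓ : ℕ} (h : p + q < ℓ) : eta ε p q ℓ = 0 := by
  have hg : gens ε p q ℓ = ∅ := by
    ext T
    simp only [gens, Set.mem_setOf_eq, Set.mem_empty_iff_false, iff_false]
    rintro ⟨u, v, huv, hu, hv, -⟩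
    omega
  have := eta_mem ε p q ℓ
  rw [hg, Submodule.span_empty, Submodule.mem_bot] at this
  exact this

lemma shifts_eta (ε : ℝ) (p q ℓ : ℕ) :
    Shifts (eta ε p q ℓ) ((p : ℤ) - ℓ) ((ℓ : ℤ) - q) := by
  refine shifts_of_mem_span ?_ (eta_mem ε p q ℓ)
  rintro T ⟨u, v, huv, hu, hv, rfl⟩
  exact (shifts_Nop ε (p-u) v u (q-v)).congr (by push_cast [Nat.cast_sub hu]; omega)
    (by push_cast [Nat.cast_sub hv]; omega)


lemma coeff_pderiv0 (a b : ℕ) (p : P2) :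
    coeff (ev a b) (pderiv (0 : Fin 2) p) = ((a : ℂ) + 1) * coeff (ev (a+1) b) p := by
  induction p using MvPolynomial.induction_on' with
  | monomial s c =>
      rw [pderiv_monomial, coeff_monomial, coeff_monomial, ev_sub0]
      by_cases hs : s = ev (a+1) b
      · subst hs
        rw [ev_apply0, ev_apply1, Nat.add_sub_cancel, if_pos rfl, if_pos rfl]
        push_cast; ring
      · rw [if_neg hs, mul_zero]
        by_cases h0 : s 0 = 0
        · split_ifs <;> simp [h0]
        · rw [if_neg]
          intro hc
          apply hs
          rw [eq_ev_iff] at hc ⊢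
          rw [ev_apply0, ev_apply1] at hc
          omega
  | add p q hp hq => simp [hp, hq]; ring

lemma Jm_apply (ε : ℝ) (p : P2) :
    Jm ε p = (ε : ℂ) • (X 1 * pderiv (0 : Fin 2) p) := by
  simp only [Jm, Module.End.mul_apply, aM, bP, LinearMap.smul_apply, LinearMap.mulLeft_apply,
    Derivation.coeFn_coe, pderiv_mul, pderiv_X_of_ne (show (1:Fin 2) ≠ 0 by decide)]
  simp

lemma coeff_Jm (ε : ℝ) (a b : ℕ) (p : P2) :
    coeff (ev a (b+1)) (Jm ε p) = (ε : ℂ) * ((a : ℂ) + 1) * coeff (ev (a+1) b) p := by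
  rw [Jm_apply, coeff_smul]
  have hev : (Finsupp.single 1 1 : Fin 2 →₀ ℕ) + ev a b = ev a (b+1) := by
    rw [eq_ev_iff]
    constructor <;> simp [Finsupp.add_apply, ev_apply0, ev_apply1, Finsupp.single_apply] <;> omega
  rw [← hev, coeff_X_mul, coeff_pderiv0]
  simp [smul_eq_mul]; ring

lemma coeff_Jm_zero (ε : ℝ) (a : ℕ) (p : P2) : coeff (ev a 0) (Jm ε p) = 0 := by
  classical
  rw [Jm_apply, coeff_smul, coeff_X_mul', if_neg, smul_zero]
  simp [Finsupp.mem_support_iff, ev_apply1]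

lemma Jm_mon (ε : ℝ) (a b : ℕ) : Jm ε (mon a b) = ((ε : ℂ) * a) • mon (a-1) (b+1) := by
  rw [show Jm ε (mon a b) = aM ε (bP (mon a b)) from rfl, bP_mon, aM_mon]

/-- The "trace on the degree-`d` component" functional. -/
def Td (d : ℕ) : E →ₗ[ℂ] ℂ :=
  ∑ j ∈ Finset.range (d+1), (lcoeff ℂ (ev (d-j) j)) ∘ₗ (LinearMap.applyₗ (mon (d-j) j))

lemma Td_apply (d : ℕ) (C : E) :
    Td d C = ∑ j ∈ Finset.range (d+1), coeff (ev (d-j) j) (C (mon (d-j) j)) := by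
  simp [Td, LinearMap.applyₗ_apply_apply]

lemma Td_Jm_comm (ε : ℝ) (d : ℕ) (C : E) : Td d (Jm ε * C) = Td d (C * Jm ε) := by
  rw [Td_apply, Td_apply]
  simp only [Module.End.mul_apply]
  rw [Finset.sum_range_succ', Finset.sum_range_succ]
  rw [coeff_Jm_zero, add_zero]
  have hd : Jm ε (mon (d-d) d) = 0 := by
    rw [Jm_mon]
    simp
  rw [hd, map_zero, coeff_zero, add_zero]
  apply Finset.sum_congr rfl
  intro i hi
  have hid : i < d := Finset.mem_range.mp hi
  have e1 : d - (i+1) = d - i - 1 := by omega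
  have e2 : d - i - 1 + 1 = d - i := by omega
  have hc : ((d - i - 1 : ℕ) : ℂ) + 1 = ((d - i : ℕ) : ℂ) := by
    exact_mod_cast congrArg (Nat.cast : ℕ → ℂ) e2
  rw [e1, coeff_Jm ε (d-i-1) i, Jm_mon, map_smul, coeff_smul, e2, smul_eq_mul]
  congr 1
  push_cast [Nat.cast_sub (show 1 ≤ d - i by omega), Nat.cast_sub hid.le]
  ring

lemma Td_ad (ε : ℝ) (d : ℕ) (A B : E) :
    Td d (A * adJm ε B) = - Td d (adJm ε A * B) := by
  have key : A * adJm ε B + adJm ε A * B = Jm ε * (A * B) - (A * B) * Jm ε := by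
    simp only [adJm, mul_sub, sub_mul, mul_assoc]
    abel
  have := congrArg (Td d) key
  rw [map_add, map_sub] at this
  have h0 := Td_Jm_comm ε d (A * B)
  linear_combination this + h0

lemma Td_ad_iter (ε : ℝ) (d : ℕ) (k : ℕ) : ∀ A B : E,
    Td d (A * (adJm ε)^[k] B) = (-1 : ℂ)^k * Td d ((adJm ε)^[k] A * B) := by
  induction k with
  | zero => intro A B; simp
  | succ k ih =>
      intro A B
      rw [Function.iterate_succ_apply, ih A (adJm ε B), Td_ad,
        ← Function.iterate_succ_apply' (adJm ε) k A]
      ring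

end EtaOrth

open EtaOrth in
/-- Orthogonality of the basis elements (Theorem 4.1, realized via the trace formula
of Lemma 5.1): if `(p₁,q₁,ℓ₁)` and `(p₂,q₂,ℓ₂)` carry the same `r` and `m` but
different `n`, then `O = η(q₁,p₁,(p₁+q₁)−ℓ₁) ∘ η(p₂,q₂,ℓ₂)` acts diagonally on each
degree-`d` monomial basis and the sum of its `d+1` eigenvalues vanishes. -/
theorem eta_orthogonality (ε : ℝ) (p₁ q₁ ℓ₁ p₂ q₂ ℓ₂ : ℕ)
    (h₁ : ℓ₁ ≤ p₁ + q₁) (h₂ : ℓ₂ ≤ p₂ + q₂)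
    (hr : (p₁ : ℤ) - (q₁ : ℤ) = (p₂ : ℤ) - (q₂ : ℤ))
    (hm : ((p₁ : ℤ) + (q₁ : ℤ)) - 2 * (ℓ₁ : ℤ) = ((p₂ : ℤ) + (q₂ : ℤ)) - 2 * (ℓ₂ : ℤ))
    (hn : p₁ + q₁ ≠ p₂ + q₂) :
    ∀ d : ℕ, ∃ c : ℕ → ℂ,
      (∀ j ≤ d,
        (eta ε q₁ p₁ ((p₁ + q₁) - ℓ₁) * eta ε p₂ q₂ ℓ₂)
            ((X 0 : P2) ^ (d - j) * (X 1) ^ j)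
          = c j • ((X 0 : P2) ^ (d - j) * (X 1) ^ j)) ∧
      ∑ j ∈ Finset.range (d + 1), c j = 0 := by
  intro d
  set L₁ : ℕ := (p₁ + q₁) - ℓ₁ with hL₁
  set O : E := eta ε q₁ p₁ L₁ * eta ε p₂ q₂ ℓ₂ with hO
  have hLcast : (L₁ : ℤ) = (p₁ : ℤ) + q₁ - ℓ₁ := by
    rw [hL₁]; push_cast [Nat.cast_sub h₁]; ring
  -- the composite operator preserves bidegrees
  have shO : Shifts O 0 0 := by
    have s1 := shifts_eta ε q₁ p₁ L₁
    have s2 := shifts_eta ε p₂ q₂ ℓ₂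
    exact (s1.mul s2).congr (by omega) (by omega)
  refine ⟨fun j => coeff (ev (d-j) j) (O (mon (d-j) j)), ?_, ?_⟩
  · intro j hj
    have h := shO (d-j) j
    rcases h with h0 | ⟨c', a', b', ha, hb, he⟩
    · show O (mon (d-j) j) = _ • mon (d-j) j
      simp only [h0, coeff_zero, zero_smul]
    · have ha' : a' = d - j := by omega
      have hb' : b' = j := by omega
      rw [ha', hb'] at he
      show O (mon (d-j) j) = _ • mon (d-j) j
      simp only [he, coeff_smul, coeff_mon_self, smul_eq_mul, mul_one]
  · -- the trace vanishes
    have hsum : ∑ j ∈ Finset.range (d + 1), coeff (ev (d-j) j) (O (mon (d-j) j)) = Td d O := by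
      rw [Td_apply]
    rw [hsum]
    have hne : ℓ₁ ≠ ℓ₂ := by omega
    rcases Nat.lt_or_ge ℓ₁ ℓ₂ with hlt | hge
    · -- move all ad's onto the first factor
      have e2 : eta ε p₂ q₂ ℓ₂ = (adJm ε)^[ℓ₂] (aP ^ p₂ * bM ε ^ q₂) := rfl
      have key := Td_ad_iter ε d ℓ₂ (eta ε q₁ p₁ L₁) (aP ^ p₂ * bM ε ^ q₂)
      have hvan : (adJm ε)^[ℓ₂] (eta ε q₁ p₁ L₁) = 0 := by
        have : (adJm ε)^[ℓ₂] (eta ε q₁ p₁ L₁) = eta ε q₁ p₁ (ℓ₂ + L₁) := by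
          rw [eta, eta, ← Function.iterate_add_apply]
        rw [this]
        exact eta_eq_zero ε (by omega)
      rw [hO, e2, key, hvan, zero_mul, map_zero, mul_zero]
    · have hlt : ℓ₂ < ℓ₁ := by omega
      have e1 : eta ε q₁ p₁ L₁ = (adJm ε)^[L₁] (aP ^ q₁ * bM ε ^ p₁) := rfl
      have key := Td_ad_iter ε d L₁ (aP ^ q₁ * bM ε ^ p₁) (eta ε p₂ q₂ ℓ₂)
      have hvan : (adJm ε)^[L₁] (eta ε p₂ q₂ ℓ₂) = 0 := by
        have : (adJm ε)^[L₁] (eta ε p₂ q₂ ℓ₂) = eta ε p₂ q₂ (L₁ + ℓ₂) := by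
          rw [eta, eta, ← Function.iterate_add_apply]
        rw [this]
        exact eta_eq_zero ε (by omega)
      rw [hvan, mul_zero, map_zero] at key
      have hpow : ((-1 : ℂ))^L₁ ≠ 0 := pow_ne_zero _ (by norm_num)
      have hO0 : ((-1 : ℂ))^L₁ * Td d O = 0 := by
        rw [hO]
        exact key.symm
      exact (mul_eq_zero.mp hO0).resolve_left hpow
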